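/- arXiv:1105.3951 — 6 statements merged into one kernel-verified Lean document; each statement's English description precedes it below -/
import Mathlib

section
/- Let (G n)_{n∈ℕ} be a tower of groups, i.e., a sequence of groups with homomorphisms f n : G (n+1) → G n. If the tower is Mittag-Leffler, then lim¹ of the tower vanishes; concretely, for every sequence x with x n ∈ G n there exists a sequence h with h n ∈ G n such that x n = h n * (f n (h (n+1)))⁻¹ for all n. -/
/-- The composite `G (n + k) → G n` of the structure maps of a tower of groups. -/
def towerComp {G : ℕ → Type*} [∀ n, Group (G n)]
    (f : ∀ n, G (n + 1) →* G n) (n : ℕ) : ∀ k, G (n + k) →* G n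
  | 0 => MonoidHom.id (G n)
  | k + 1 => (towerComp f n k).comp (f (n + k))

section Aux

variable {G : ℕ → Type*} [∀ n, Group (G n)]

/-- Cast homomorphism along an equality of indices. -/
def castGH : ∀ {a b : ℕ}, a = b → (G a →* G b)
  | _, _, rfl => MonoidHom.id _

lemma castGH_apply_pi (x : ∀ n, G n) {a b : ℕ} (h : a = b) : castGH h (x a) = x b := by
  cases h; rfl

lemma castGH_castGH {a b : ℕ} (h : a = b) (g : G b) : castGH h (castGH h.symm g) = g := by
  cases h; rfl

lemma f_castGH (f : ∀ n, G (n + 1) →* G n) {a b : ℕ} (h : a = b) (z : G (a + 1)) :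
    f b (castGH (by rw [h]) z) = castGH h (f a z) := by
  cases h; rfl

lemma towerComp_succ (f : ∀ n, G (n + 1) →* G n) (n : ℕ) :
    ∀ (k : ℕ) (z : G (n + (k + 1))),
      towerComp f n (k + 1) z = f n (towerComp f (n + 1) k (castGH (by omega) z))
  | 0, z => rfl
  | k + 1, z => by
      show towerComp f n (k + 1) (f (n + (k + 1)) z) = _
      rw [towerComp_succ f n k (f (n + (k + 1)) z)]
      exact congrArg (fun w => f n (towerComp f (n + 1) k w))
        (f_castGH f (by omega : n + (k + 1) = n + 1 + k) z).symm

lemma mem_range_succ (f : ∀ n, G (n + 1) →* G n) {n k : ℕ} (w : G (n + 1))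
    (hw : w ∈ (towerComp f (n + 1) k).range) :
    f n w ∈ (towerComp f n (k + 1)).range := by
  obtain ⟨z, rfl⟩ := hw
  refine ⟨castGH (by omega : n + 1 + k = n + (k + 1)) z, ?_⟩
  rw [towerComp_succ f n k]
  exact congrArg (fun w => f n (towerComp f (n + 1) k w))
    (castGH_castGH (by omega : n + (k + 1) = n + 1 + k) z)

lemma range_succ_sub (f : ∀ n, G (n + 1) →* G n) {n k : ℕ} (w : G n)
    (hw : w ∈ (towerComp f n (k + 1)).range) :
    ∃ u ∈ (towerComp f (n + 1) k).range, f n u = w := by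
  obtain ⟨z, rfl⟩ := hw
  exact ⟨towerComp f (n + 1) k (castGH (by omega) z), ⟨_, rfl⟩,
    (towerComp_succ f n k z).symm⟩

/-- Ordered partial product of a sequence in a group. -/
def pprod {H : Type*} [Group H] (c : ℕ → H) : ℕ → H
  | 0 => 1
  | n + 1 => pprod c n * c n

lemma pprod_div_mem {H : Type*} [Group H] (c : ℕ → H) (S : Subgroup H) {a b : ℕ}
    (hab : a ≤ b) (hc : ∀ j, a ≤ j → c j ∈ S) :
    (pprod c a)⁻¹ * pprod c b ∈ S := by
  induction b, hab using Nat.le_induction with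
  | base => simpa using S.one_mem
  | succ b hb ih =>
      have h : (pprod c a)⁻¹ * pprod c (b + 1) = ((pprod c a)⁻¹ * pprod c b) * c b := by
        show (pprod c a)⁻¹ * (pprod c b * c b) = _
        group
      rw [h]
      exact S.mul_mem ih (hc b hb)

lemma pprod_shift (f : ∀ n, G (n + 1) →* G n) (x : ∀ n, G n) (n : ℕ) :
    ∀ N : ℕ, pprod (fun j => towerComp f n j (x (n + j))) (N + 1)
      = x n * f n (pprod (fun j => towerComp f (n + 1) j (x (n + 1 + j))) N)
  | 0 => by simp [pprod, towerComp]
  | N + 1 => by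
      show pprod (fun j => towerComp f n j (x (n + j))) (N + 1)
          * towerComp f n (N + 1) (x (n + (N + 1))) = _
      rw [pprod_shift f x n N, towerComp_succ f n N (x (n + (N + 1))),
          castGH_apply_pi x (by omega : n + (N + 1) = n + 1 + N)]
      show _ = x n * f n (pprod (fun j => towerComp f (n + 1) j (x (n + 1 + j))) N
          * towerComp f (n + 1) N (x (n + 1 + N)))
      rw [map_mul, mul_assoc]

end Aux

/-- If a tower of groups is Mittag-Leffler, then its `lim¹` vanishes. -/
theorem limOne_vanishes_of_mittagLeffler {G : ℕ → Type*} [∀ n, Group (G n)]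
    (f : ∀ n, G (n + 1) →* G n)
    (hML : ∀ n, ∃ K : ℕ, ∀ k : ℕ, K ≤ k →
      (towerComp f n k).range = (towerComp f n K).range) :
    ∀ x : ∀ n, G n, ∃ h : ∀ n, G n, ∀ n, x n = h n * (f n (h (n + 1)))⁻¹ := by
  intro x
  choose K hK using hML
  set I : ∀ n, Subgroup (G n) := fun n => (towerComp f n (K n)).range with hI
  -- The maps send stable images into stable images.
  have hC : ∀ n (w : G (n + 1)), w ∈ I (n + 1) → f n w ∈ I n := by
    intro n w hw
    have h1 : w ∈ (towerComp f (n + 1) (max (K n) (K (n + 1)))).range := by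
      rw [hK (n + 1) _ (le_max_right _ _)]; exact hw
    have h2 := mem_range_succ f w h1
    rwa [hK n _ (le_trans (le_max_left _ _) (Nat.le_succ _))] at h2
  -- The maps between stable images are surjective.
  have hB : ∀ n (g : G n), g ∈ I n → ∃ g', g' ∈ I (n + 1) ∧ f n g' = g := by
    intro n g hg
    have h1 : g ∈ (towerComp f n (max (K n) (K (n + 1)) + 1)).range := by
      rw [hK n _ (le_trans (le_max_left _ _) (Nat.le_succ _))]; exact hg
    obtain ⟨u, hu, hfu⟩ := range_succ_sub f g h1
    refine ⟨u, ?_, hfu⟩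
    rwa [hK (n + 1) _ (le_max_right _ _)] at hu
  -- Cutoffs.
  let D : ℕ → ℕ := fun n => 1 + (Finset.range (n + 2)).sum K
  have hD1 : ∀ n, K (n + 1) ≤ D n := by
    intro n
    have : K (n + 1) ≤ (Finset.range (n + 2)).sum K :=
      Finset.single_le_sum (fun i _ => Nat.zero_le _) (Finset.mem_range.mpr (by omega))
    simp only [D]; omega
  have hDmono : ∀ n, D n ≤ D (n + 1) := by
    intro n
    have : (Finset.range (n + 2)).sum K ≤ (Finset.range (n + 1 + 2)).sum K :=
      Finset.sum_le_sum_of_subset (Finset.range_subset_range.mpr (by omega))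
    simp only [D]; omega
  let c : ∀ n, ℕ → G n := fun n j => towerComp f n j (x (n + j))
  have hcI : ∀ n j, K n ≤ j → c n j ∈ I n := by
    intro n j hj
    rw [hI]
    simp only
    rw [← hK n j hj]
    exact ⟨x (n + j), rfl⟩
  let p : ∀ n, G n := fun n => pprod (c n) (D n + 1)
  let q : ∀ n, G (n + 1) := fun n => pprod (c (n + 1)) (D n)
  have hp : ∀ n, p n = x n * f n (q n) := fun n => pprod_shift f x n (D n)
  let t : ∀ n, G (n + 1) := fun n => (q n)⁻¹ * p (n + 1)
  have htI : ∀ n, t n ∈ I (n + 1) := by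
    intro n
    exact pprod_div_mem (c (n + 1)) (I (n + 1)) (le_trans (hDmono n) (Nat.le_succ _))
      (fun j hj => hcI (n + 1) j (le_trans (hD1 n) hj))
  -- recursive construction of the correcting sequence inside stable images
  have step : ∀ n (g : G n), g ∈ I n → ∃ g', g' ∈ I (n + 1) ∧ f n g' = (f n (t n))⁻¹ * g := by
    intro n g hg
    exact hB n ((f n (t n))⁻¹ * g) ((I n).mul_mem ((I n).inv_mem (hC n _ (htI n))) hg)
  let F : ∀ n, {g : G n // g ∈ I n} := fun n =>
    Nat.rec ⟨1, (I 0).one_mem⟩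
      (fun m ih => ⟨(step m ih.1 ih.2).choose, (step m ih.1 ih.2).choose_spec.1⟩) n
  have hF : ∀ n, f n (F (n + 1)).1 = (f n (t n))⁻¹ * (F n).1 := fun n =>
    (step n (F n).1 (F n).2).choose_spec.2
  refine ⟨fun n => p n * (F n).1, fun n => ?_⟩
  have e1 : f n (p (n + 1) * (F (n + 1)).1) = f n (p (n + 1)) * ((f n (t n))⁻¹ * (F n).1) := by
    rw [map_mul, hF]
  show x n = p n * (F n).1 * (f n (p (n + 1) * (F (n + 1)).1))⁻¹
  rw [e1, hp n]
  have ht : f n (t n) = (f n (q n))⁻¹ * f n (p (n + 1)) := by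
    show f n ((q n)⁻¹ * p (n + 1)) = _
    rw [map_mul, map_inv]
  rw [ht]
  group
end

section
/- Let (G n)_{n∈ℕ} be a tower of groups with homomorphisms f n : G (n+1) → G n, and suppose each group G n is countable. If lim¹ of the tower vanishes — that is, for every sequence x with x n ∈ G n there exists a sequence h with h n ∈ G n such that x n = h n * (f n (h (n+1)))⁻¹ for all n — then the tower is Mittag-Leffler. -/
/-- Key combinatorial lemma: in a countable group, if a decreasing sequence of
subgroups has the property that every coherent sequence of cosets has a common
element, then the sequence of subgroups stabilizes. -/
lemma key_lemma {Γ : Type*} [Group Γ] [Countable Γ] (H : ℕ → Subgroup Γ)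
    (hmono : ∀ k, H (k + 1) ≤ H k)
    (hsolv : ∀ c : ℕ → Γ, c 0 = 1 → (∀ k, (c k)⁻¹ * c (k + 1) ∈ H k) →
      ∃ g : Γ, ∀ k, (c k)⁻¹ * g ∈ H k) :
    ∃ K : ℕ, ∀ k : ℕ, K ≤ k → H k = H K := by
  classical
  have hanti : ∀ {i j : ℕ}, i ≤ j → H j ≤ H i := by
    intro i j hij
    induction hij with
    | refl => exact le_rfl
    | step _ ih => exact le_trans (hmono _) (by exact ih)
  by_contra hcon
  push_neg at hcon
  have hstep : ∀ K : ℕ, ∃ k : ℕ, K < k ∧ ∃ a : Γ, a ∈ H K ∧ a ∉ H k := by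
    intro K
    obtain ⟨k, hKk, hne⟩ := hcon K
    have hlt : H k < H K := lt_of_le_of_ne (hanti hKk) hne
    obtain ⟨a, haK, hak⟩ := SetLike.exists_of_lt hlt
    refine ⟨k, lt_of_le_of_ne hKk ?_, a, haK, hak⟩
    rintro rfl; exact hne rfl
  choose nxt hnxt a ha hna using hstep
  obtain ⟨e, he⟩ := exists_surjective_nat Γ
  -- build the sequence of stages and coset representatives
  let seq : ℕ → ℕ × Γ := fun j => Nat.rec ((0 : ℕ), (1 : Γ))
    (fun j p => (nxt p.1, if p.2⁻¹ * e j ∈ H p.1 then e j * a p.1 else p.2)) j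
  set m : ℕ → ℕ := fun j => (seq j).1 with hm_def
  set d : ℕ → Γ := fun j => (seq j).2 with hd_def
  have hm0 : m 0 = 0 := rfl
  have hd0 : d 0 = 1 := rfl
  have hmsucc : ∀ j, m (j + 1) = nxt (m j) := fun j => rfl
  have hdsucc : ∀ j, d (j + 1) = if (d j)⁻¹ * e j ∈ H (m j) then e j * a (m j) else d j :=
    fun j => rfl
  have hmlt : ∀ j, m j < m (j + 1) := fun j => by rw [hmsucc]; exact hnxt (m j)
  have hmmono : StrictMono m := strictMono_nat_of_lt_succ hmlt
  have hd_step : ∀ j, (d j)⁻¹ * d (j + 1) ∈ H (m j) := by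
    intro j
    by_cases hcase : (d j)⁻¹ * e j ∈ H (m j)
    · rw [hdsucc, if_pos hcase, ← mul_assoc]
      exact mul_mem hcase (ha (m j))
    · rw [hdsucc, if_neg hcase, inv_mul_cancel]
      exact one_mem _
  have hbad : ∀ j, (d (j + 1))⁻¹ * e j ∉ H (m (j + 1)) := by
    intro j
    by_cases hcase : (d j)⁻¹ * e j ∈ H (m j)
    · rw [hdsucc, if_pos hcase, hmsucc]
      have : (e j * a (m j))⁻¹ * e j = (a (m j))⁻¹ := by group
      rw [this]
      intro hmem
      exact hna (m j) (inv_mem_iff.mp hmem)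
    · rw [hdsucc, if_neg hcase, hmsucc]
      intro hmem
      exact hcase (hanti (le_of_lt (hnxt (m j))) hmem)
  -- interpolate to a full coherent coset sequence
  have hex : ∀ i : ℕ, ∃ j, i ≤ m j := fun i => ⟨i, hmmono.le_apply⟩
  let idx : ℕ → ℕ := fun i => Nat.find (hex i)
  let c : ℕ → Γ := fun i => d (idx i)
  have hidx_spec : ∀ i, i ≤ m (idx i) := fun i => Nat.find_spec (hex i)
  have hidx_min : ∀ i j, j < idx i → m j < i := by
    intro i j hj
    have := Nat.find_min (hex i) hj
    omega
  have hidx0 : idx 0 = 0 := by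
    have h1 : idx 0 ≤ 0 := Nat.find_le (by rw [hm0])
    omega
  have hc0 : c 0 = 1 := by simp only [c, hidx0, hd0]
  have hc : ∀ i, (c i)⁻¹ * c (i + 1) ∈ H i := by
    intro i
    rcases lt_or_eq_of_le (hidx_spec i) with hlt | heq
    · -- idx (i+1) = idx i
      have h1 : idx (i + 1) ≤ idx i := Nat.find_le hlt
      have h2 : idx i ≤ idx (i + 1) := by
        by_contra hcon2
        push_neg at hcon2
        have := hidx_min i (idx (i + 1)) hcon2
        have := hidx_spec (i + 1)
        omega
      have : idx (i + 1) = idx i := le_antisymm h1 h2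
      simp only [c, this, inv_mul_cancel]
      exact one_mem _
    · -- i = m (idx i), so idx (i+1) = idx i + 1
      have h1 : idx (i + 1) ≤ idx i + 1 := by
        apply Nat.find_le
        have := hmlt (idx i)
        omega
      have h2 : idx i + 1 ≤ idx (i + 1) := by
        rw [Nat.le_find_iff]
        intro j hj hle
        have : m j ≤ m (idx i) := hmmono.monotone (by omega)
        omega
      have hidxsucc : idx (i + 1) = idx i + 1 := le_antisymm h1 h2
      have : H i = H (m (idx i)) := by rw [← heq]
      rw [this]
      simp only [c, hidxsucc]
      exact hd_step (idx i)
  obtain ⟨g, hg⟩ := hsolv c hc0 hc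
  obtain ⟨j₀, rfl⟩ := he g
  have hidxm : idx (m (j₀ + 1)) = j₀ + 1 := by
    have h1 : idx (m (j₀ + 1)) ≤ j₀ + 1 := Nat.find_le le_rfl
    have h2 : j₀ + 1 ≤ idx (m (j₀ + 1)) := by
      rw [Nat.le_find_iff]
      intro j hj hle
      exact absurd hle (not_le.mpr (hmmono hj))
    omega
  have := hg (m (j₀ + 1))
  simp only [c, hidxm] at this
  exact hbad j₀ this

/-- If a tower of countable groups has vanishing `lim¹`, then it is Mittag-Leffler. -/
theorem mittagLeffler_of_limOne_vanishes {G : ℕ → Type*} [∀ n, Group (G n)]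
    [∀ n, Countable (G n)] (f : ∀ n, G (n + 1) →* G n)
    (hlim : ∀ x : ∀ n, G n, ∃ h : ∀ n, G n, ∀ n, x n = h n * (f n (h (n + 1)))⁻¹) :
    ∀ n, ∃ K : ℕ, ∀ k : ℕ, K ≤ k →
      (towerComp f n k).range = (towerComp f n K).range := by
  intro n
  apply key_lemma (fun k => (towerComp f n k).range)
  · -- monotonicity
    intro k x hx
    obtain ⟨y, hy⟩ := hx
    exact ⟨f (n + k) y, hy⟩
  · -- solvability of coset sequences
    intro c hc0 hc
    choose y hy using hc
    obtain ⟨x, hx⟩ : ∃ x : ∀ m, G m, ∀ k, x (n + k) = y k := by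
      refine ⟨fun m => if h : n ≤ m then
        cast (congrArg G (Nat.add_sub_cancel' h)) (y (m - n)) else 1, ?_⟩
      intro k
      dsimp only
      rw [dif_pos (Nat.le_add_right n k)]
      have key : ∀ j (hj : n + j = n + k), cast (congrArg G hj) (y j) = y k := by
        intro j hj
        have hjk : j = k := by omega
        subst hjk
        exact cast_eq _ _
      exact key (n + k - n) (Nat.add_sub_cancel' (Nat.le_add_right n k))
    obtain ⟨h, hh⟩ := hlim x
    have htel : ∀ k, h n = c k * towerComp f n k (h (n + k)) := by
      intro k
      induction k with
      | zero =>
        show h n = c 0 * (MonoidHom.id (G n)) (h (n + 0))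
        rw [hc0, one_mul]
        rfl
      | succ k ih =>
        have hstep : h (n + k) = x (n + k) * f (n + k) (h (n + k + 1)) := by
          rw [hh (n + k)]
          group
        calc h n = c k * towerComp f n k (h (n + k)) := ih
          _ = c k * towerComp f n k (x (n + k) * f (n + k) (h (n + k + 1))) := by
              rw [← hstep]
          _ = c k * (towerComp f n k (x (n + k)) *
                towerComp f n k (f (n + k) (h (n + k + 1)))) := by rw [map_mul]
          _ = c k * (((c k)⁻¹ * c (k + 1)) * towerComp f n (k + 1) (h (n + (k + 1)))) := by
              rw [hx k, hy k]; rfl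
          _ = c (k + 1) * towerComp f n (k + 1) (h (n + (k + 1))) := by group
    exact ⟨h n, fun k => ⟨h (n + k), by rw [htel k, inv_mul_cancel_left]⟩⟩
end

section
/- Let (G n)_{n∈ℕ} be a tower of groups in which each G n is a compact Hausdorff topological group and each structure map f n : G (n+1) → G n is a continuous group homomorphism. Then lim¹ of the tower vanishes: for every sequence x with x n ∈ G n there exists a sequence h with h n ∈ G n such that x n = h n * (f n (h (n+1)))⁻¹ for all n. -/
/-- Partial solution: solves the telescoping equation for `n < N`, is `1` for `n ≥ N`. -/
noncomputable def limOneAux {G : ℕ → Type*} [∀ n, Group (G n)]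
    (f : ∀ n, G (n + 1) →* G n) (x : ∀ n, G n) (N : ℕ) : ∀ n, G n :=
  fun n =>
    if h : N ≤ n then 1 else x n * f n (limOneAux f x N (n + 1))
termination_by n => N - n
decreasing_by omega

theorem limOneAux_spec {G : ℕ → Type*} [∀ n, Group (G n)]
    (f : ∀ n, G (n + 1) →* G n) (x : ∀ n, G n) (N : ℕ) {n : ℕ} (hn : n < N) :
    x n = limOneAux f x N n * (f n (limOneAux f x N (n + 1)))⁻¹ := by
  rw [limOneAux]
  simp [Nat.not_le.mpr hn, mul_assoc]

/-- For a tower of compact Hausdorff topological groups with continuous structure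
maps, `lim¹` vanishes. -/
theorem limOne_vanishes_of_compact {G : ℕ → Type*} [∀ n, Group (G n)]
    [∀ n, TopologicalSpace (G n)] [∀ n, IsTopologicalGroup (G n)]
    [∀ n, CompactSpace (G n)] [∀ n, T2Space (G n)]
    (f : ∀ n, G (n + 1) →* G n) (hf : ∀ n, Continuous (f n)) :
    ∀ x : ∀ n, G n, ∃ h : ∀ n, G n, ∀ n, x n = h n * (f n (h (n + 1)))⁻¹ := by
  intro x
  set S : ℕ → Set (∀ n, G n) :=
    fun N => ⋂ (n : ℕ) (_ : n < N), {h | x n = h n * (f n (h (n + 1)))⁻¹} with hS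
  have hclosed : ∀ N, IsClosed (S N) := by
    intro N
    refine isClosed_iInter fun n => isClosed_iInter fun _ => ?_
    exact isClosed_eq continuous_const
      ((continuous_apply n).mul
        (((hf n).comp (continuous_apply (n + 1))).inv))
  have hne : ∀ N, (S N).Nonempty := by
    intro N
    refine ⟨limOneAux f x N, ?_⟩
    simp only [hS, Set.mem_iInter, Set.mem_setOf_eq]
    exact fun n hn => limOneAux_spec f x N hn
  have hmono : ∀ N, S (N + 1) ⊆ S N := by
    intro N h hh
    simp only [hS, Set.mem_iInter, Set.mem_setOf_eq] at hh ⊢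
    exact fun n hn => hh n (hn.trans (Nat.lt_succ_self N))
  have := IsCompact.nonempty_iInter_of_sequence_nonempty_isCompact_isClosed
    S hmono hne ((hclosed 0).isCompact) hclosed
  obtain ⟨h, hh⟩ := this
  refine ⟨h, fun n => ?_⟩
  have := Set.mem_iInter.mp hh (n + 1)
  simp only [hS, Set.mem_iInter, Set.mem_setOf_eq] at this
  exact this n (Nat.lt_succ_self n)
end

section
/- Let (G n)_{n∈ℕ} be a tower of groups with homomorphisms f n : G (n+1) → G n in which every group G n is finite. Then the tower is Mittag-Leffler, and consequently lim¹ of the tower vanishes: for every sequence x with x n ∈ G n there exists a sequence h with h n ∈ G n such that x n = h n * (f n (h (n+1)))⁻¹ for all n. -/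
/-- Finite-stage partial solution: `partialProd f x k m = x m * f m (x (m+1) * f (m+1) (...))`
with `k` factors. -/
def partialProd {G : ℕ → Type*} [∀ n, Group (G n)]
    (f : ∀ n, G (n + 1) →* G n) (x : ∀ n, G n) : ∀ (_k m : ℕ), G m
  | 0, _ => 1
  | k + 1, m => x m * f m (partialProd f x k (m + 1))

/-- A tower of finite groups is Mittag-Leffler, and consequently its `lim¹` vanishes. -/
theorem mittagLeffler_and_limOne_vanishes_of_finite {G : ℕ → Type*} [∀ n, Group (G n)]
    [∀ n, Finite (G n)] (f : ∀ n, G (n + 1) →* G n) :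
    (∀ n, ∃ K : ℕ, ∀ k : ℕ, K ≤ k →
      (towerComp f n k).range = (towerComp f n K).range) ∧
    (∀ x : ∀ n, G n, ∃ h : ∀ n, G n, ∀ n, x n = h n * (f n (h (n + 1)))⁻¹) := by
  constructor
  · intro n
    have anti : ∀ {j k : ℕ}, j ≤ k →
        (towerComp f n k).range ≤ (towerComp f n j).range := by
      intro j k hjk
      induction k with
      | zero => exact Nat.le_zero.mp hjk ▸ le_rfl
      | succ k ih =>
        rcases Nat.lt_or_ge j (k + 1) with hj | hj
        · refine le_trans ?_ (ih (Nat.lt_succ_iff.mp hj))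
          rintro y ⟨z, rfl⟩
          exact ⟨f (n + k) z, rfl⟩
        · have : j = k + 1 := le_antisymm hjk hj
          subst this; exact le_rfl
    set S : Set ℕ := Set.range (fun k => Nat.card (towerComp f n k).range) with hS
    have hSne : S.Nonempty := ⟨_, ⟨0, rfl⟩⟩
    obtain ⟨K, hK⟩ : ∃ K, Nat.card (towerComp f n K).range = sInf S := Nat.sInf_mem hSne
    refine ⟨K, fun k hk => ?_⟩
    refine Subgroup.eq_of_le_of_card_ge (anti hk) ?_
    rw [hK]
    exact Nat.sInf_le ⟨k, rfl⟩
  · intro x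
    letI : ∀ n, TopologicalSpace (G n) := fun _ => ⊥
    haveI : ∀ n, DiscreteTopology (G n) := fun _ => ⟨rfl⟩
    set C : ℕ → Set (∀ n, G n) :=
      fun n => {h | ∀ m, m < n → x m = h m * (f m (h (m + 1)))⁻¹} with hC
    have hsub : ∀ n, C (n + 1) ⊆ C n := fun n h hh m hm =>
      hh m (hm.trans (Nat.lt_succ_self n))
    have hne : ∀ n, (C n).Nonempty := by
      intro n
      refine ⟨fun m => partialProd f x (n - m) m, fun m hm => ?_⟩
      have e : n - m = (n - (m + 1)) + 1 := by omega
      show x m = partialProd f x (n - m) m * (f m (partialProd f x (n - (m + 1)) (m + 1)))⁻¹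
      rw [e]
      show x m = (x m * f m (partialProd f x (n - (m + 1)) (m + 1))) * _
      group
    have hcl : ∀ n, IsClosed (C n) := by
      intro n
      have : C n = ⋂ m ∈ Set.Iio n,
          (fun h : ∀ n, G n => x m * (h m * (f m (h (m + 1)))⁻¹)⁻¹) ⁻¹' {1} := by
        ext h
        simp only [Set.mem_iInter, Set.mem_preimage, Set.mem_singleton_iff, Set.mem_Iio, hC,
          Set.mem_setOf_eq, mul_inv_eq_one]
      rw [this]
      refine isClosed_biInter fun m _ => IsClosed.preimage ?_ isClosed_singleton
      have h1 : Continuous fun h : ∀ n, G n => (h m, h (m + 1)) :=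
        (continuous_apply m).prodMk (continuous_apply (m + 1))
      exact (continuous_of_discreteTopology
        (f := fun p : G m × G (m + 1) => x m * (p.1 * (f m p.2)⁻¹)⁻¹)).comp h1
    obtain ⟨h, hh⟩ := IsCompact.nonempty_iInter_of_sequence_nonempty_isCompact_isClosed
      C hsub hne (isClosed_univ.isCompact.of_isClosed_subset (hcl 0) (Set.subset_univ _)) hcl
    simp only [Set.mem_iInter] at hh
    exact ⟨h, fun n => hh (n + 1) n (Nat.lt_succ_self n)⟩
end

section
/- Let (G n)_{n∈ℕ} and (H n)_{n∈ℕ} be towers of groups, with structure homomorphisms f n : G (n+1) → G n and g n : H (n+1) → H n, such that every G n and every H n is countable. Suppose there are bijections of underlying sets φ n : G n → H n (not assumed to be homomorphisms) satisfying φ n ∘ f n = g n ∘ φ (n+1) for all n. If lim¹ of the tower (G n) vanishes, then lim¹ of the tower (H n) vanishes. -/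
open Function

section Tower

variable {G : ℕ → Type*} [∀ n, Group (G n)]

/-- Composite structure map of a tower. -/
def tchain (f : ∀ n, G (n + 1) →* G n) : ∀ n k, G (n + k) →* G n
  | _, 0 => MonoidHom.id _
  | n, k + 1 => (tchain f n k).comp (f (n + k))

variable (f : ∀ n, G (n + 1) →* G n)

lemma tchain_range_le (n k : ℕ) : ∀ d, (tchain f n (k + d)).range ≤ (tchain f n k).range := by
  intro d
  induction d with
  | zero => exact le_rfl
  | succ d ih =>
      rintro _ ⟨b, rfl⟩
      exact ih ⟨f (n + (k + d)) b, rfl⟩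

lemma tchain_range_mono (n : ℕ) {k k' : ℕ} (h : k ≤ k') :
    (tchain f n k').range ≤ (tchain f n k).range := by
  obtain ⟨d, rfl⟩ := Nat.exists_eq_add_of_le h
  exact tchain_range_le f n k d

lemma cast_apply_f {m m' : ℕ} (h : m = m') (b : G (m + 1)) :
    f m' (cast (congrArg (fun i => G (i + 1)) h) b) = cast (congrArg G h) (f m b) := by
  subst h; rfl

lemma tchain_left (n : ℕ) : ∀ (k : ℕ) (b : G ((n + 1) + k)),
    f n (tchain f (n + 1) k b) = tchain f n (k + 1) (cast (congrArg G (Nat.succ_add n k)) b) := by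
  intro k
  induction k with
  | zero => intro b; rfl
  | succ k ih =>
      intro b
      calc f n (tchain f (n + 1) (k + 1) b)
          = f n (tchain f (n + 1) k (f ((n + 1) + k) b)) := rfl
        _ = tchain f n (k + 1) (cast (congrArg G (Nat.succ_add n k)) (f ((n + 1) + k) b)) := ih _
        _ = tchain f n (k + 1)
              (f (n + (k + 1)) (cast (congrArg (fun i => G (i + 1)) (Nat.succ_add n k)) b)) :=
            congrArg (tchain f n (k + 1)) (cast_apply_f f (Nat.succ_add n k) b).symm
        _ = tchain f n (k + 2) (cast (congrArg G (Nat.succ_add n (k + 1))) b) := rfl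


/-- Telescope product `x n * F(x (n+1)) * ⋯ * F^{k-1}(x (n+k-1))`. -/
def ttel (f : ∀ n, G (n + 1) →* G n) (x : ∀ n, G n) (n : ℕ) : ℕ → G n
  | 0 => 1
  | k + 1 => ttel f x n k * tchain f n k (x (n + k))

omit [∀ n, Group (G n)] in
lemma cast_apply_seq (x : ∀ n, G n) {m m' : ℕ} (h : m = m') :
    cast (congrArg G h) (x m) = x m' := by subst h; rfl

lemma ttel_shift (x : ∀ n, G n) (n : ℕ) :
    ∀ j, x n * f n (ttel f x (n + 1) j) = ttel f x n (j + 1) := by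
  intro j
  induction j with
  | zero => show x n * f n 1 = 1 * tchain f n 0 (x (n + 0)); simp [tchain]
  | succ j ih =>
      show x n * f n (ttel f x (n + 1) j * tchain f (n + 1) j (x ((n + 1) + j))) = _
      rw [map_mul, ← mul_assoc, ih, tchain_left, cast_apply_seq x (Nat.succ_add n j)]
      rfl

lemma ttel_div_mem (x : ∀ n, G n) (n c : ℕ) :
    ∀ d, (ttel f x n c)⁻¹ * ttel f x n (c + d) ∈ (tchain f n c).range := by
  intro d
  induction d with
  | zero => simpa using one_mem (tchain f n c).range
  | succ d ih =>
      have h2 : tchain f n (c + d) (x (n + (c + d))) ∈ (tchain f n c).range :=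
        tchain_range_le f n c d ⟨_, rfl⟩
      have := mul_mem ih h2
      simpa [ttel, mul_assoc] using this

lemma ttel_solves (x h : ∀ n, G n) (hx : ∀ m, h m = x m * f m (h (m + 1))) (n : ℕ) :
    ∀ k, h n = ttel f x n k * tchain f n k (h (n + k)) := by
  intro k
  induction k with
  | zero => show h n = 1 * h n; rw [one_mul]
  | succ k ih =>
      show h n = ttel f x n k * tchain f n k (x (n + k)) *
        tchain f n k (f (n + k) (h (n + k + 1)))
      rw [mul_assoc, ← map_mul, ← hx (n + k)]
      exact ih

lemma tchain_comm {H : ℕ → Type*} [∀ n, Group (H n)]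
    (g : ∀ n, H (n + 1) →* H n) (φ : ∀ n, G n ≃ H n)
    (hφ : ∀ n (a : G (n + 1)), φ n (f n a) = g n (φ (n + 1) a)) (n : ℕ) :
    ∀ (k : ℕ) (a : G (n + k)), φ n (tchain f n k a) = tchain g n k (φ (n + k) a) := by
  intro k
  induction k with
  | zero => intro a; rfl
  | succ k ih =>
      intro a
      calc φ n (tchain f n (k + 1) a) = φ n (tchain f n k (f (n + k) a)) := rfl
        _ = tchain g n k (φ (n + k) (f (n + k) a)) := ih _
        _ = tchain g n k (g (n + k) (φ (n + k + 1) a)) := by rw [hφ]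
        _ = tchain g n (k + 1) (φ (n + (k + 1)) a) := rfl

end Tower

section MLA

variable {G : ℕ → Type*} [∀ n, Group (G n)] (f : ∀ n, G (n + 1) →* G n)

theorem ML_of_vanishing [∀ n, Countable (G n)]
    (hG : ∀ x : ∀ n, G n, ∃ h : ∀ n, G n, ∀ n, x n = h n * (f n (h (n + 1)))⁻¹) (n : ℕ) :
    ∃ K, ∀ k, K ≤ k → (tchain f n k).range = (tchain f n K).range := by
  classical
  by_contra hnot
  push_neg at hnot
  obtain ⟨e, he⟩ := exists_surjective_nat (G n)
  -- one diagonalization step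
  have hstep : ∀ (j k : ℕ) (p : G n), ∃ k' u, k < k' ∧ u ∈ (tchain f n k).range ∧
      ∀ v ∈ (tchain f n k').range, e j ≠ p * u * v := by
    intro j k p
    obtain ⟨k', hk'le, hne⟩ := hnot k
    have hlt : (tchain f n k').range < (tchain f n k).range :=
      lt_of_le_of_ne (tchain_range_mono f n hk'le) hne
    obtain ⟨w, hwk, hwk'⟩ := SetLike.exists_of_lt hlt
    have hklt : k < k' := lt_of_le_of_ne hk'le (by rintro rfl; exact hne rfl)
    by_cases hc : ∃ v ∈ (tchain f n k').range, e j = p * v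
    · obtain ⟨v, hv, hev⟩ := hc
      refine ⟨k', w, hklt, hwk, ?_⟩
      intro v' hv' heq
      apply hwk'
      have h1 : v = w * v' := by
        have h0 : p * v = p * (w * v') := by rw [← hev, heq, mul_assoc]
        exact mul_left_cancel h0
      have h2 : w = v * v'⁻¹ := by rw [h1]; group
      rw [h2]
      exact mul_mem hv (inv_mem hv')
    · exact ⟨k', 1, hklt, one_mem _, fun v hv heq => hc ⟨v, hv, by simpa using heq⟩⟩
  choose kf uf hkf huf hav using hstep
  -- the inductively constructed stages (level, partial telescope product)
  let s : ℕ → ℕ × G n := fun j =>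
    Nat.rec (0, 1) (fun j prev => (kf j prev.1 prev.2, prev.2 * uf j prev.1 prev.2)) j
  have hklt : ∀ j, (s j).1 < (s (j + 1)).1 := fun j => hkf j _ _
  have hmono : StrictMono (fun j => (s j).1) := strictMono_nat_of_lt_succ hklt
  have humem : ∀ j, uf j (s j).1 (s j).2 ∈ (tchain f n (s j).1).range := fun j => huf j _ _
  -- pick preimages and build the test element x
  let aa : ∀ j, G (n + (s j).1) := fun j => (humem j).choose
  have haa : ∀ j, tchain f n (s j).1 (aa j) = uf j (s j).1 (s j).2 := fun j => (humem j).choose_spec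
  let x : ∀ m, G m := fun m =>
    if h : ∃ j, n + (s j).1 = m then cast (congrArg G h.choose_spec) (aa h.choose) else 1
  have hx_at : ∀ j, tchain f n (s j).1 (x (n + (s j).1)) = uf j (s j).1 (s j).2 := by
    intro j
    have hex : ∃ j', n + (s j').1 = n + (s j).1 := ⟨j, rfl⟩
    have hxeq : x (n + (s j).1) = cast (congrArg G hex.choose_spec) (aa hex.choose) :=
      dif_pos hex
    have hj : hex.choose = j := hmono.injective (by have := hex.choose_spec; omega)
    rw [hxeq]
    have key : ∀ (j₀ : ℕ) (hspec : n + (s j₀).1 = n + (s j).1), j₀ = j →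
        tchain f n (s j).1 (cast (congrArg G hspec) (aa j₀)) = uf j (s j).1 (s j).2 := by
      rintro j₀ hspec rfl
      exact haa j₀
    exact key hex.choose hex.choose_spec hj
  have hx_ne : ∀ m, (∀ j, n + (s j).1 ≠ m) → x m = 1 := by
    intro m hm
    exact dif_neg (by rintro ⟨j, hj⟩; exact hm j hj)
  obtain ⟨h, hh⟩ := hG x
  have hrec : ∀ m, h m = x m * f m (h (m + 1)) := by
    intro m; rw [hh m]; group
  have htel := ttel_solves f x h hrec n
  -- the telescope collapses to the stage products
  have hseg : ∀ j d, 1 ≤ d → (s j).1 + d ≤ (s (j + 1)).1 →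
      ttel f x n ((s j).1 + d) = ttel f x n (s j).1 * uf j (s j).1 (s j).2 := by
    intro j d
    induction d with
    | zero => omega
    | succ d ih =>
        intro _ hle
        by_cases hd : d = 0
        · subst hd
          show ttel f x n (s j).1 * tchain f n (s j).1 (x (n + (s j).1)) = _
          rw [hx_at]
        · have hd1 : 1 ≤ d := Nat.one_le_iff_ne_zero.2 hd
          have hone : x (n + ((s j).1 + d)) = 1 := by
            apply hx_ne
            intro j'
            rcases le_or_gt j' j with hj' | hj'
            · have h1 : (s j').1 ≤ (s j).1 := hmono.monotone hj'
              omega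
            · have h1 : (s (j + 1)).1 ≤ (s j').1 := hmono.monotone (Nat.succ_le_of_lt hj')
              omega
          show ttel f x n ((s j).1 + d) * tchain f n ((s j).1 + d) (x (n + ((s j).1 + d))) = _
          rw [hone, map_one, mul_one]
          exact ih hd1 (by omega)
  have htp : ∀ j, ttel f x n (s j).1 = (s j).2 := by
    intro j
    induction j with
    | zero => rfl
    | succ j ih =>
        have hlt' := hklt j
        have hd : (s j).1 + ((s (j + 1)).1 - (s j).1) = (s (j + 1)).1 := by omega
        calc ttel f x n (s (j + 1)).1
            = ttel f x n ((s j).1 + ((s (j + 1)).1 - (s j).1)) := by rw [hd]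
          _ = ttel f x n (s j).1 * uf j (s j).1 (s j).2 := hseg j _ (by omega) (by omega)
          _ = (s j).2 * uf j (s j).1 (s j).2 := by rw [ih]
          _ = (s (j + 1)).2 := rfl
  obtain ⟨j, hej⟩ := he (h n)
  have hmem : h n = (s (j + 1)).2 * tchain f n (s (j + 1)).1 (h (n + (s (j + 1)).1)) := by
    rw [← htp (j + 1)]; exact htel (s (j + 1)).1
  exact hav j (s j).1 (s j).2 (tchain f n (s (j + 1)).1 (h (n + (s (j + 1)).1)))
    ⟨_, rfl⟩ (hej.trans hmem)

end MLA

section MLC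

variable {H : ℕ → Type*} [∀ n, Group (H n)] (g : ∀ n, H (n + 1) →* H n)

theorem vanishing_of_ML
    (hML : ∀ n, ∃ K, ∀ k, K ≤ k → (tchain g n k).range = (tchain g n K).range) :
    ∀ y : ∀ n, H n, ∃ h : ∀ n, H n, ∀ n, y n = h n * (g n (h (n + 1)))⁻¹ := by
  classical
  choose K hK using hML
  -- a "monotone enough" modification of K
  let K' : ℕ → ℕ := fun n => Nat.rec (K 0) (fun m ih => max (K (m + 1)) ih) n
  have hK'ge : ∀ n, K n ≤ K' n := by
    intro n
    cases n with
    | zero => exact le_rfl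
    | succ m => exact le_max_left _ _
  have hK'mono : ∀ n, K' n ≤ K' (n + 1) := fun n => le_max_right _ _
  have stable : ∀ n k, K n ≤ k → (tchain g n k).range = (tchain g n (K' n)).range := by
    intro n k hk
    rw [hK n k hk, hK n (K' n) (hK'ge n)]
  have S_le : ∀ n k, (tchain g n (K' n)).range ≤ (tchain g n k).range := by
    intro n k
    rcases le_total k (K' n) with h | h
    · exact tchain_range_mono g n h
    · exact le_of_eq (stable n k (le_trans (hK'ge n) h)).symm
  -- the stable images form a levelwise surjective subtower
  have surj : ∀ (n : ℕ) (sel : H n), sel ∈ (tchain g n (K' n)).range →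
      ∃ t, t ∈ (tchain g (n + 1) (K' (n + 1))).range ∧ g n t = sel := by
    intro n sel hsel
    obtain ⟨b, hb⟩ := S_le n (K (n + 1) + 1) hsel
    refine ⟨tchain g (n + 1) (K (n + 1))
      (cast (congrArg H (Nat.succ_add n (K (n + 1))).symm) b), ?_, ?_⟩
    · rw [← stable (n + 1) (K (n + 1)) le_rfl]
      exact ⟨_, rfl⟩
    · rw [tchain_left g n (K (n + 1)), cast_cast]
      exact hb
  intro y
  -- approximate solution via truncated telescopes
  set h0 : ∀ n, H n := fun n => ttel g y n (K' n) with hh0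
  have hE : ∀ n, (h0 n)⁻¹ * y n * g n (h0 (n + 1)) ∈ (tchain g n (K' n)).range := by
    intro n
    have hmono := hK'mono n
    have hd : K' n + (K' (n + 1) + 1 - K' n) = K' (n + 1) + 1 := by omega
    have hmem := ttel_div_mem g y n (K' n) (K' (n + 1) + 1 - K' n)
    rw [hd] at hmem
    have h1 : y n * g n (h0 (n + 1)) = ttel g y n (K' (n + 1) + 1) := ttel_shift g y n (K' (n + 1))
    rw [mul_assoc, h1]
    exact hmem
  -- solve exactly within the stable subtower, by recursion with choices
  have pick : ∀ (n : ℕ) (sel : H n), sel ∈ (tchain g n (K' n)).range →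
      {t : H (n + 1) // t ∈ (tchain g (n + 1) (K' (n + 1))).range ∧ g n t = sel} :=
    fun n sel hsel => Classical.indefiniteDescription _ (surj n sel hsel)
  let hs : ∀ n, {t : H n // t ∈ (tchain g n (K' n)).range} := fun n =>
    Nat.rec ⟨1, one_mem _⟩
      (fun n prev =>
        let r := pick n (((h0 n)⁻¹ * y n * g n (h0 (n + 1)))⁻¹ * prev.1)
          (mul_mem (inv_mem (hE n)) prev.2)
        ⟨r.1, r.2.1⟩) n
  have hs_spec : ∀ n, g n (hs (n + 1)).1 = ((h0 n)⁻¹ * y n * g n (h0 (n + 1)))⁻¹ * (hs n).1 :=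
    fun n => (pick n (((h0 n)⁻¹ * y n * g n (h0 (n + 1)))⁻¹ * (hs n).1)
      (mul_mem (inv_mem (hE n)) (hs n).2)).2.2
  refine ⟨fun n => h0 n * (hs n).1, fun n => ?_⟩
  rw [map_mul, hs_spec n]
  group

end MLC


/-- If two towers of countable groups are levelwise bijective, compatibly with the
structure maps (the bijections need not be homomorphisms), and `lim¹` of the first
tower vanishes, then `lim¹` of the second tower vanishes. -/
theorem limOne_vanishes_of_equiv {G H : ℕ → Type*} [∀ n, Group (G n)]
    [∀ n, Group (H n)] [∀ n, Countable (G n)] [∀ n, Countable (H n)]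
    (f : ∀ n, G (n + 1) →* G n) (g : ∀ n, H (n + 1) →* H n)
    (φ : ∀ n, G n ≃ H n)
    (hφ : ∀ n (x : G (n + 1)), φ n (f n x) = g n (φ (n + 1) x))
    (hG : ∀ x : ∀ n, G n, ∃ h : ∀ n, G n, ∀ n, x n = h n * (f n (h (n + 1)))⁻¹) :
    ∀ y : ∀ n, H n, ∃ h : ∀ n, H n, ∀ n, y n = h n * (g n (h (n + 1)))⁻¹ := by
  have hcorr : ∀ n k, ((tchain g n k).range : Set (H n)) =
      φ n '' ((tchain f n k).range : Set (G n)) := by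
    intro n k
    ext b
    constructor
    · rintro ⟨c, rfl⟩
      refine ⟨tchain f n k ((φ (n + k)).symm c), ⟨_, rfl⟩, ?_⟩
      rw [tchain_comm f g φ hφ]
      simp
    · rintro ⟨w, ⟨a, rfl⟩, rfl⟩
      exact ⟨φ (n + k) a, (tchain_comm f g φ hφ n k a).symm⟩
  have hMLg : ∀ n, ∃ K, ∀ k, K ≤ k → (tchain g n k).range = (tchain g n K).range := by
    intro n
    obtain ⟨K, hK⟩ := ML_of_vanishing f hG n
    exact ⟨K, fun k hk => SetLike.ext' (by rw [hcorr, hcorr, hK k hk])⟩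
  exact vanishing_of_ML g hMLg
end

section
/- Let ι be an index set and for each i ∈ ι let (G i n)_{n∈ℕ} be a tower of groups with homomorphisms f i n : G i (n+1) → G i n. Suppose that for every n there exists K(n) ∈ ℕ such that for every i ∈ ι and every k ≥ K(n), the image of G i (n+k) → G i n equals the image of G i (n+K(n)) → G i n (i.e., the towers are Mittag-Leffler with a stabilization bound uniform in i). Then the product tower (∏_{i∈ι} G i n)_{n∈ℕ}, with structure maps given componentwise by the f i n, is Mittag-Leffler, and consequently its lim¹ vanishes: for every x ∈ ∏_n ∏_i G i n there exists h with x n = h n * (f n (h (n+1)))⁻¹ for all n, where f n denotes the componentwise structure map. -/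
/-- The componentwise structure map of a product of towers of groups. -/
def piTowerMap {ι : Type*} {G : ι → ℕ → Type*} [∀ i n, Group (G i n)]
    (f : ∀ i n, G i (n + 1) →* G i n) (n : ℕ) :
    (∀ i, G i (n + 1)) →* ∀ i, G i n where
  toFun x i := f i n (x i)
  map_one' := by funext i; simp
  map_mul' x y := by funext i; simp

section Aux

variable {G : ℕ → Type*} [∀ n, Group (G n)] (f : ∀ n, G (n + 1) →* G n) (x : ∀ n, G n)

/-- A partial solution (chain) for `x` on the interval `[n, n+k]`. -/
def IsChn (n k : ℕ) (h : ∀ j, G j) : Prop :=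
  ∀ j, n ≤ j → j < n + k → x j = h j * (f j (h (j + 1)))⁻¹

/-- The "twisting product" `x n * f(x (n+1)) * ... `. -/
def aElt (n : ℕ) : ℕ → G n
  | 0 => 1
  | k + 1 => aElt n k * towerComp f n k (x (n + k))

lemma isChn_mono {n k K : ℕ} (hKk : K ≤ k) {h : ∀ j, G j} (hc : IsChn f x n k h) :
    IsChn f x n K h := fun j hj hj' => hc j hj (by omega)

lemma chain_eval : ∀ (k n : ℕ) (h : ∀ j, G j), IsChn f x n k h →
    h n = aElt f x n k * towerComp f n k (h (n + k))
  | 0, n, h, _ => by simp [aElt, towerComp]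
  | k + 1, n, h, hc => by
    have h1 := chain_eval k n h (isChn_mono f x (Nat.le_succ k) hc)
    have h2 := hc (n + k) (by omega) (by omega)
    have h3 : h (n + k) = x (n + k) * f (n + k) (h (n + k + 1)) := by
      rw [h2]; group
    rw [h1, h3]
    simp only [aElt, towerComp, map_mul, mul_assoc, MonoidHom.comp_apply]
    rfl

lemma chain_exists : ∀ (k n : ℕ) (t : G (n + k)), ∃ h : ∀ j, G j,
    IsChn f x n k h ∧ h n = aElt f x n k * towerComp f n k t ∧ h (n + k) = t
  | 0, n, t => by
    refine ⟨Function.update (fun j => 1) n t, fun j h1 h2 => by omega, ?_, ?_⟩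
    · simp [aElt, towerComp]
    · simp
  | k + 1, n, t => by
    obtain ⟨h, hc, hn, htop⟩ := chain_exists k n (x (n + k) * f (n + k) t)
    refine ⟨Function.update h (n + k + 1) t, ?_, ?_, ?_⟩
    · intro j hj1 hj2
      rcases Nat.lt_or_ge j (n + k) with hlt | hge
      · rw [Function.update_of_ne (by omega), Function.update_of_ne (by omega)]
        exact hc j hj1 hlt
      · have hj : j = n + k := by omega
        subst hj
        rw [Function.update_of_ne (by omega), Function.update_self, htop]
        group
    · rw [Function.update_of_ne (by omega), hn]
      simp only [aElt, towerComp, map_mul, mul_assoc, MonoidHom.comp_apply]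
    · show Function.update h (n + k + 1) t (n + k + 1) = t
      exact Function.update_self _ _ _

/-- The set of values at level `n` of chains of length `k`. -/
def chSet (n k : ℕ) : Set (G n) := {g | ∃ h : ∀ j, G j, IsChn f x n k h ∧ h n = g}

lemma chSet_nonempty (n k : ℕ) : ∃ g, g ∈ chSet f x n k := by
  obtain ⟨h, hc, hn, -⟩ := chain_exists f x k n 1
  exact ⟨h n, h, hc, rfl⟩

lemma chSet_stable {n k K : ℕ} (hKk : K ≤ k)
    (hr : (towerComp f n k).range = (towerComp f n K).range) :
    chSet f x n k = chSet f x n K := by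
  apply Set.Subset.antisymm
  · rintro g ⟨h, hc, rfl⟩
    exact ⟨h, isChn_mono f x hKk hc, rfl⟩
  · rintro g ⟨h, hc, rfl⟩
    -- a base point of `chSet n k`
    obtain ⟨h0, hc0, hn0, -⟩ := chain_exists f x k n 1
    have hev0 := chain_eval f x K n h0 (isChn_mono f x hKk hc0)
    have hev := chain_eval f x K n h hc
    -- the combination lies in range K = range k
    have hmem : (towerComp f n K (h0 (n + K)))⁻¹ * towerComp f n K (h (n + K)) ∈
        (towerComp f n k).range := by
      rw [hr]
      exact mul_mem (inv_mem ⟨h0 (n + K), rfl⟩) ⟨h (n + K), rfl⟩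
    obtain ⟨t, ht⟩ := hmem
    obtain ⟨h', hc', hn', -⟩ := chain_exists f x k n t
    refine ⟨h', hc', ?_⟩
    have haelt : aElt f x n k = aElt f x n K * towerComp f n K (h0 (n + K)) := by
      rw [← hev0, hn0]; simp
    rw [hn', haelt, ht, hev]
    group

lemma chSet_step {n k : ℕ} {g : G n} (hg : g ∈ chSet f x n (k + 1)) :
    ∃ g' ∈ chSet f x (n + 1) k, g = x n * f n g' := by
  obtain ⟨h, hc, rfl⟩ := hg
  refine ⟨h (n + 1), ⟨h, fun j hj1 hj2 => hc j (by omega) (by omega), rfl⟩, ?_⟩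
  have hn := hc n (le_refl n) (by omega)
  rw [hn]; group

theorem aux_limOne
    (hML : ∀ n, ∃ K : ℕ, ∀ k : ℕ, K ≤ k →
      (towerComp f n k).range = (towerComp f n K).range) :
    ∃ h : ∀ n, G n, ∀ n, x n = h n * (f n (h (n + 1)))⁻¹ := by
  choose K hK using hML
  have hstep : ∀ n, ∀ g ∈ chSet f x n (K n),
      ∃ g' ∈ chSet f x (n + 1) (K (n + 1)), g = x n * f n g' := by
    intro n g hg
    set k := max (K n) (K (n + 1)) with hkdef
    have h1 : chSet f x n (k + 1) = chSet f x n (K n) :=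
      chSet_stable f x (by omega) (hK n (k + 1) (by omega))
    have h2 : chSet f x (n + 1) k = chSet f x (n + 1) (K (n + 1)) :=
      chSet_stable f x (by omega) (hK (n + 1) k (by omega))
    rw [← h1] at hg
    obtain ⟨g', hg', hgg⟩ := chSet_step f x hg
    exact ⟨g', h2 ▸ hg', hgg⟩
  obtain ⟨g0, hg0⟩ := chSet_nonempty f x 0 (K 0)
  let H : ∀ n, {g : G n // g ∈ chSet f x n (K n)} := fun n =>
    Nat.rec ⟨g0, hg0⟩
      (fun n p => ⟨(hstep n p.1 p.2).choose, (hstep n p.1 p.2).choose_spec.1⟩) n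
  refine ⟨fun n => (H n).1, fun n => ?_⟩
  show x n = (H n).1 * (f n ((H (n + 1)).1))⁻¹
  have hs := (hstep n (H n).1 (H n).2).choose_spec.2
  rw [eq_mul_inv_iff_mul_eq]
  exact hs.symm

end Aux

section Pi

variable {ι : Type*} {G : ι → ℕ → Type*} [∀ i n, Group (G i n)]
  (f : ∀ i n, G i (n + 1) →* G i n)

lemma towerComp_pi : ∀ (k n : ℕ) (g : ∀ i, G i (n + k)) (i : ι),
    towerComp (G := fun m => ∀ i, G i m) (piTowerMap f) n k g i =
      towerComp (f i) n k (g i)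
  | 0, n, g, i => rfl
  | k + 1, n, g, i => by
    show towerComp (G := fun m => ∀ i, G i m) (piTowerMap f) n k
        (piTowerMap f (n + k) g) i = towerComp (f i) n k (f i (n + k) (g i))
    rw [towerComp_pi k n (piTowerMap f (n + k) g) i]
    rfl

lemma mem_range_pi {k n : ℕ} (y : ∀ i, G i n) :
    y ∈ (towerComp (G := fun m => ∀ i, G i m) (piTowerMap f) n k).range ↔
      ∀ i, y i ∈ (towerComp (f i) n k).range := by
  constructor
  · rintro ⟨g, rfl⟩ i
    exact ⟨g i, (towerComp_pi f k n g i).symm⟩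
  · intro hy
    choose g hg using hy
    exact ⟨g, funext fun i => by rw [towerComp_pi]; exact hg i⟩

end Pi

/-- A product of towers of groups that are Mittag-Leffler with a stabilization bound
uniform in the index is itself Mittag-Leffler, and consequently its `lim¹` vanishes. -/
theorem piTower_mittagLeffler_and_limOne_vanishes {ι : Type*} {G : ι → ℕ → Type*}
    [∀ i n, Group (G i n)] (f : ∀ i n, G i (n + 1) →* G i n)
    (hML : ∀ n, ∃ K : ℕ, ∀ (i : ι) (k : ℕ), K ≤ k →
      (towerComp (G := G i) (f i) n k).range = (towerComp (G := G i) (f i) n K).range) :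
    (∀ n, ∃ K : ℕ, ∀ k : ℕ, K ≤ k →
      (towerComp (G := fun m => ∀ i, G i m) (piTowerMap f) n k).range =
        (towerComp (G := fun m => ∀ i, G i m) (piTowerMap f) n K).range) ∧
    (∀ x : ∀ n, ∀ i, G i n, ∃ h : ∀ n, ∀ i, G i n,
      ∀ n, x n = h n * (piTowerMap f n (h (n + 1)))⁻¹) := by
  have hML' : ∀ n, ∃ K : ℕ, ∀ k : ℕ, K ≤ k →
      (towerComp (G := fun m => ∀ i, G i m) (piTowerMap f) n k).range =
        (towerComp (G := fun m => ∀ i, G i m) (piTowerMap f) n K).range := by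
    intro n
    obtain ⟨K, hK⟩ := hML n
    refine ⟨K, fun k hk => ?_⟩
    ext y
    rw [mem_range_pi, mem_range_pi]
    exact forall_congr' fun i => by rw [hK i k hk]
  exact ⟨hML', fun x => aux_limOne (piTowerMap f) x hML'⟩
end
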